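/- arXiv:1506.04905 — 8 statements merged into one kernel-verified Lean document; each statement's English description precedes it below -/
import Mathlib

section
/- Let V be a finite-dimensional vector space over a field F with two bases α = {α₁,...,αₙ} and β = {β₁,...,βₙ}. Then the non-zero component graphs Γ(V_α) and Γ(V_β) are isomorphic as graphs. -/
/-- The non-zero component graph of a vector space `V` with respect to a basis `b`:
vertices are the non-zero vectors, and two distinct vectors are adjacent iff they have a
common basis vector with non-zero coefficient in their basis representations. -/
def NZCG {F V : Type*} [Field F] [AddCommGroup V] [Module F V] {n : ℕ}
    (b : Module.Basis (Fin n) F V) : SimpleGraph {v : V // v ≠ 0} where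
  Adj x y := x ≠ y ∧ ∃ i, b.repr x.1 i ≠ 0 ∧ b.repr y.1 i ≠ 0
  symm := by
    constructor
    rintro x y ⟨hxy, i, h1, h2⟩
    exact ⟨hxy.symm, i, h2, h1⟩
  loopless := by
    constructor
    rintro x ⟨h, _⟩
    exact h rfl

/-! Any two bases indexed by `Fin n` differ by the linear automorphism sending one to the
other, and that automorphism preserves coordinates, hence adjacency. -/

namespace NZCG

variable {F V W : Type*} [Field F] [AddCommGroup V] [Module F V] [AddCommGroup W] [Module F W]
  {n : ℕ}

def isoMap (b : Module.Basis (Fin n) F V) (e : V ≃ₗ[F] W) : NZCG b ≃g NZCG (b.map e) where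
  toEquiv := e.toEquiv.subtypeEquiv fun _ => e.map_ne_zero_iff.symm
  map_rel_iff' := by
    intro x y
    simp only [NZCG, Module.Basis.map_repr, LinearEquiv.trans_apply, ne_eq,
      Equiv.subtypeEquiv_apply, LinearEquiv.coe_toEquiv, LinearEquiv.symm_apply_apply,
      EmbeddingLike.apply_eq_iff_eq, Subtype.ext_iff]

end NZCG

theorem nzcg_basis_independent {F V : Type*} [Field F] [AddCommGroup V] [Module F V] {n : ℕ}
    (bα bβ : Module.Basis (Fin n) F V) :
    Nonempty (NZCG bα ≃g NZCG bβ) := by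
  have hmap : bα.map (bα.equiv bβ (Equiv.refl _)) = bβ := by
    rw [Module.Basis.map_equiv, Equiv.refl_symm, Module.Basis.reindex_refl]
  exact ⟨hmap ▸ NZCG.isoMap bα (bα.equiv bβ (Equiv.refl _))⟩
end

section
/- The non-zero component graph Γ(V_α) of a finite-dimensional vector space V (of dimension n ≥ 1) is connected, and if dim V ≥ 2 its diameter equals 2. -/
namespace SimpleGraph

variable {α : Type*} {G : SimpleGraph α} {u : α}

lemma IsUniversal.ediam_le_two (h : G.IsUniversal u) : G.ediam ≤ 2 :=
  calc G.ediam ≤ 2 * G.eccent u := G.ediam_le_two_mul_eccent u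
    _ ≤ 2 * 1 := by gcongr; exact (G.eccent_le_one_iff u).mpr h
    _ = 2 := mul_one 2

lemma IsUniversal.diam_eq_two (h : G.IsUniversal u) (hG : G ≠ ⊤) : G.diam = 2 := by
  have : Nontrivial α := by
    by_contra hα
    rw [not_nontrivial_iff_subsingleton] at hα
    exact hG (eq_top_iff.mpr fun x y hxy ↦ absurd (Subsingleton.elim x y) hxy)
  have hfin : G.ediam ≠ ⊤ := ne_top_of_le_ne_top (by decide) h.ediam_le_two
  have hle : G.diam ≤ 2 := by
    rw [SimpleGraph.diam, ← ENat.toNat_ofNat 2]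
    exact ENat.toNat_le_toNat h.ediam_le_two (by decide)
  have hne0 : G.diam ≠ 0 := G.diam_ne_zero_of_ediam_ne_top hfin
  have hne1 : G.diam ≠ 1 := fun h1 ↦ hG (G.diam_eq_one.mp h1)
  omega

end SimpleGraph

lemma Module.Basis.exists_repr_ne_zero {ι R M : Type*} [Semiring R] [AddCommMonoid M]
    [Module R M] (b : Module.Basis ι R M) {v : M} (hv : v ≠ 0) : ∃ i, b.repr v i ≠ 0 := by
  by_contra! h
  exact hv (b.repr.map_eq_zero_iff.mp (Finsupp.ext h))

section NZCG

variable {F V : Type*} [Field F] [AddCommGroup V] [Module F V] {n : ℕ}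
  (b : Module.Basis (Fin n) F V)

noncomputable def NZCG.allOnes (hn : 0 < n) : {v : V // v ≠ 0} :=
  ⟨b.equivFun.symm 1, by
    have : Nonempty (Fin n) := ⟨⟨0, hn⟩⟩
    exact b.equivFun.symm.map_ne_zero_iff.mpr one_ne_zero⟩

lemma NZCG.repr_allOnes (hn : 0 < n) (i : Fin n) : b.repr (allOnes b hn).1 i = 1 := by
  rw [← b.equivFun_apply, allOnes, LinearEquiv.apply_symm_apply, Pi.one_apply]

lemma NZCG.isUniversal_allOnes (hn : 0 < n) : (NZCG b).IsUniversal (allOnes b hn) := by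
  intro x hx
  obtain ⟨i, hi⟩ := b.exists_repr_ne_zero x.2
  exact ⟨hx, i, by rw [repr_allOnes]; exact one_ne_zero, hi⟩

lemma NZCG.not_adj_basis {i j : Fin n} (hij : i ≠ j) :
    ¬ (NZCG b).Adj ⟨b i, b.ne_zero i⟩ ⟨b j, b.ne_zero j⟩ := by
  rintro ⟨-, k, hi, hj⟩
  simp only [b.repr_self, Finsupp.single_apply, ne_eq, ite_eq_right_iff,
    Classical.not_imp] at hi hj
  exact hij (hi.1.trans hj.1.symm)

lemma NZCG.ne_top (hn : 2 ≤ n) : NZCG b ≠ ⊤ := by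
  intro htop
  have h01 : (⟨0, by omega⟩ : Fin n) ≠ ⟨1, hn⟩ := by simp
  refine not_adj_basis b h01 ?_
  rw [htop, SimpleGraph.top_adj, ne_eq, Subtype.mk.injEq]
  exact b.injective.ne h01

end NZCG

theorem nzcg_connected_diam {F V : Type*} [Field F] [AddCommGroup V] [Module F V] {n : ℕ}
    (hn : 0 < n) (b : Module.Basis (Fin n) F V) :
    (NZCG b).Connected ∧ (2 ≤ n → (NZCG b).diam = 2) :=
  have hu := NZCG.isUniversal_allOnes b hn
  ⟨.of_isUniversal hu, fun h2 ↦ hu.diam_eq_two (NZCG.ne_top b h2)⟩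
end

section
/- The basis {α₁, α₂, ..., αₙ} is a minimal dominating set of the non-zero component graph Γ(V_α). -/
/-- `D` is a dominating set of `G`: every vertex outside `D` is adjacent to a vertex of `D`. -/
def IsDominatingSet {α : Type*} (G : SimpleGraph α) (D : Set α) : Prop :=
  ∀ v ∉ D, ∃ u ∈ D, G.Adj u v

theorem IsDominatingSet.not_ssubset_of_isIndepSet {α : Type*} {G : SimpleGraph α}
    {D D' : Set α} (hD : G.IsIndepSet D) (hD' : D' ⊂ D) : ¬ IsDominatingSet G D' := by
  intro hdom
  obtain ⟨x, hxD, hxD'⟩ := Set.exists_of_ssubset hD'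
  obtain ⟨u, huD', hux⟩ := hdom x hxD'
  exact hD (hD'.subset huD') hxD hux.ne hux

theorem Module.Basis.repr_self_apply_ne_zero_iff {R M ι : Type*} [Semiring R] [Nontrivial R]
    [AddCommMonoid M] [Module R M] (b : Module.Basis ι R M) {i j : ι} :
    b.repr (b i) j ≠ 0 ↔ j = i := by
  classical
  simp [Module.Basis.repr_self, Finsupp.single_apply_ne_zero]

theorem Module.Basis.exists_repr_apply_ne_zero {R M ι : Type*} [Semiring R] [AddCommMonoid M]
    [Module R M] (b : Module.Basis ι R M) {v : M} (hv : v ≠ 0) : ∃ i, b.repr v i ≠ 0 := by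
  by_contra! h
  exact hv (b.repr.map_eq_zero_iff.mp (Finsupp.ext h))

section NZCG

variable {F V : Type*} [Field F] [AddCommGroup V] [Module F V] {n : ℕ}
  (b : Module.Basis (Fin n) F V)

noncomputable def basisVertex (i : Fin n) : {v : V // v ≠ 0} := ⟨b i, b.ne_zero i⟩

theorem nzcg_adj_basisVertex_iff {i : Fin n} {v : {v : V // v ≠ 0}} :
    (NZCG b).Adj (basisVertex b i) v ↔ basisVertex b i ≠ v ∧ b.repr v.1 i ≠ 0 := by
  simp only [NZCG, basisVertex, b.repr_self_apply_ne_zero_iff, exists_eq_left]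

theorem range_basisVertex :
    Set.range (basisVertex b) = {v : {v : V // v ≠ 0} | ∃ i, (v : V) = b i} := by
  ext v
  exact ⟨fun ⟨i, hi⟩ => ⟨i, by rw [← hi]; rfl⟩, fun ⟨i, hi⟩ => ⟨i, Subtype.ext hi.symm⟩⟩

theorem isDominatingSet_range_basisVertex :
    IsDominatingSet (NZCG b) (Set.range (basisVertex b)) := by
  intro v hv
  obtain ⟨i, hi⟩ := b.exists_repr_apply_ne_zero v.2
  exact ⟨basisVertex b i, ⟨i, rfl⟩, (nzcg_adj_basisVertex_iff b).2 ⟨fun h => hv ⟨i, h⟩, hi⟩⟩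

theorem isIndepSet_range_basisVertex : (NZCG b).IsIndepSet (Set.range (basisVertex b)) := by
  rintro _ ⟨i, rfl⟩ _ ⟨j, rfl⟩ hne hadj
  have hij : i = j := b.repr_self_apply_ne_zero_iff.1 ((nzcg_adj_basisVertex_iff b).1 hadj).2
  exact hne (hij ▸ rfl)

end NZCG

theorem nzcg_basis_minimal_dominating {F V : Type*} [Field F] [AddCommGroup V] [Module F V]
    {n : ℕ} (b : Module.Basis (Fin n) F V) :
    IsDominatingSet (NZCG b) {v : {v : V // v ≠ 0} | ∃ i, (v : V) = b i} ∧
      ∀ D' ⊂ {v : {v : V // v ≠ 0} | ∃ i, (v : V) = b i},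
        ¬ IsDominatingSet (NZCG b) D' := by
  rw [← range_basisVertex]
  exact ⟨isDominatingSet_range_basisVertex b,
    fun _ hD' => IsDominatingSet.not_ssubset_of_isIndepSet (isIndepSet_range_basisVertex b) hD'⟩
end

section
/- The independence number of the non-zero component graph Γ(V_α) equals dim V = n. -/
/-- `I` is an independent set of vertices of `G`: pairwise non-adjacent. -/
def IsIndependentSet {α : Type*} (G : SimpleGraph α) (I : Set α) : Prop :=
  I.Pairwise fun u v => ¬ G.Adj u v

/-!
The basis vectors have pairwise disjoint supports, so they form an independent set of size `n`.
Conversely, pick for every vertex a coordinate in its support: two distinct vertices of an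
independent set have disjoint supports, so this choice is injective on the set, which
therefore has at most `n` elements.
-/

namespace NZCG

variable {F V : Type*} [Field F] [AddCommGroup V] [Module F V] {n : ℕ}
  (b : Module.Basis (Fin n) F V)

noncomputable def basisVertex (i : Fin n) : {v : V // v ≠ 0} := ⟨b i, b.ne_zero i⟩

lemma basisVertex_injective : Function.Injective (basisVertex b) :=
  fun _ _ h => b.injective (congrArg Subtype.val h)

lemma ncard_range_basisVertex : (Set.range (basisVertex b)).ncard = n := by
  rw [Set.ncard_range_of_injective (basisVertex_injective b), Nat.card_eq_fintype_card,
    Fintype.card_fin]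

lemma isIndependentSet_range_basisVertex :
    IsIndependentSet (NZCG b) (Set.range (basisVertex b)) := by
  rintro _ ⟨i, rfl⟩ _ ⟨j, rfl⟩ hne ⟨-, k, hik, hjk⟩
  simp only [basisVertex, b.repr_self_apply, ne_eq, ite_eq_right_iff, one_ne_zero,
    imp_false, not_not] at hik hjk
  exact hne (by rw [hik, hjk])

lemma exists_repr_ne_zero (v : {v : V // v ≠ 0}) : ∃ i, b.repr v.1 i ≠ 0 :=
  DFunLike.ne_iff.mp ((LinearEquiv.map_ne_zero_iff b.repr).mpr v.2)

lemma injOn_of_isIndependentSet {I : Set {v : V // v ≠ 0}} (hI : IsIndependentSet (NZCG b) I)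
    {f : {v : V // v ≠ 0} → Fin n} (hf : ∀ v, b.repr v.1 (f v) ≠ 0) : Set.InjOn f I := by
  intro u hu v hv huv
  by_contra hne
  exact hI hu hv hne ⟨hne, f u, hf u, huv ▸ hf v⟩

lemma finite_and_ncard_le_of_isIndependentSet {I : Set {v : V // v ≠ 0}}
    (hI : IsIndependentSet (NZCG b) I) : I.Finite ∧ I.ncard ≤ n := by
  choose f hf using exists_repr_ne_zero b
  have hinj := injOn_of_isIndependentSet b hI hf
  refine ⟨Set.Finite.of_finite_image (Set.toFinite _) hinj, ?_⟩
  calc I.ncard ≤ (Set.univ : Set (Fin n)).ncard :=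
        Set.ncard_le_ncard_of_injOn f (fun _ _ => Set.mem_univ _) hinj Set.finite_univ
    _ = n := by simp

end NZCG

theorem nzcg_independence_number {F V : Type*} [Field F] [AddCommGroup V] [Module F V]
    {n : ℕ} (b : Module.Basis (Fin n) F V) :
    (∃ I : Set {v : V // v ≠ 0}, IsIndependentSet (NZCG b) I ∧ I.ncard = n) ∧
      ∀ I : Set {v : V // v ≠ 0}, IsIndependentSet (NZCG b) I →
        I.Finite ∧ I.ncard ≤ n :=
  ⟨⟨_, NZCG.isIndependentSet_range_basisVertex b, NZCG.ncard_range_basisVertex b⟩,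
    fun _ hI => NZCG.finite_and_ncard_le_of_isIndependentSet b hI⟩
end

section
/- Every independent set of vertices in the non-zero component graph Γ(V_α) is a linearly independent subset of the vector space V. -/
open Function

/-!
The coordinate vectors of the vertices of an independent set have pairwise disjoint supports,
so they are non-zero vectors taken from the independent family of submodules of finitely
supported functions on those supports.
-/

theorem Finsupp.iSupIndep_supported {ι α R M : Type*} [Semiring R] [AddCommMonoid M]
    [Module R M] {s : ι → Set α} (hs : Pairwise (Disjoint on s)) :
    iSupIndep fun i => supported M R (s i) := by
  intro i
  have hle : ⨆ (j) (_ : j ≠ i), supported M R (s j) ≤ supported M R (⋃ (j) (_ : j ≠ i), s j) :=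
    iSup₂_le fun j hj => supported_mono (Set.subset_biUnion_of_mem (u := s) hj)
  refine (disjoint_supported_supported ?_).mono_right hle
  exact Set.disjoint_iUnion₂_right.mpr fun j hj => hs (Ne.symm hj)

theorem Module.Basis.linearIndependent_of_pairwise_disjoint_support {ι κ R M : Type*}
    [Ring R] [IsDomain R] [AddCommGroup M] [Module R M] (b : Module.Basis ι R M)
    {v : κ → M} (hv : ∀ k, v k ≠ 0)
    (hd : Pairwise (Disjoint on fun k => (b.repr (v k)).support)) :
    LinearIndependent R v := by
  refine LinearIndependent.of_comp (b.repr : M →ₗ[R] ι →₀ R) ?_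
  refine (Finsupp.iSupIndep_supported (M := R) (R := R)
    (s := fun k => ((b.repr (v k)).support : Set ι)) ?_).linearIndependent _
    (fun k => Finsupp.mem_supported_support R _) (fun k => by simpa using hv k)
  exact fun k l hkl => Finset.disjoint_coe.mpr (hd hkl)

theorem nzcg_indep_set_linearIndependent {F V : Type*} [Field F] [AddCommGroup V] [Module F V]
    {n : ℕ} (b : Module.Basis (Fin n) F V) (I : Set {v : V // v ≠ 0})
    (hI : IsIndependentSet (NZCG b) I) :
    LinearIndependent F (fun v : I => ((v : {v : V // v ≠ 0}) : V)) := by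
  refine b.linearIndependent_of_pairwise_disjoint_support (fun v => v.1.2) ?_
  rintro ⟨u, hu⟩ ⟨w, hw⟩ huw
  have hne : u ≠ w := fun h => huw (Subtype.ext h)
  exact Finset.disjoint_left.mpr fun i hui hwi =>
    hI hu hw hne ⟨hne, i, Finsupp.mem_support_iff.mp hui, Finsupp.mem_support_iff.mp hwi⟩
end

section
/- Let φ be a graph automorphism of Γ(V_α), where {α₁,...,αₙ} is a basis of V. Then there exist a permutation σ ∈ Sₙ and non-zero scalars c₁,...,cₙ ∈ F such that φ(αᵢ) = cᵢ·α_{σ(i)} for all i; in particular φ maps the basis {α₁,...,αₙ} to another basis of V. -/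
theorem SimpleGraph.Iso.eq_or_adj_iff {α β : Type*} {G : SimpleGraph α} {H : SimpleGraph β}
    (φ : G ≃g H) (u v : α) : (φ u = φ v ∨ H.Adj (φ u) (φ v)) ↔ (u = v ∨ G.Adj u v) := by
  rw [φ.injective.eq_iff, φ.map_adj_iff]

theorem SimpleGraph.Iso.closedNbhd_subset_iff {α β : Type*} {G : SimpleGraph α}
    {H : SimpleGraph β} (φ : G ≃g H) (v w : α) :
    (∀ u, u = φ v ∨ H.Adj u (φ v) → u = φ w ∨ H.Adj u (φ w)) ↔
      (∀ u, u = v ∨ G.Adj u v → u = w ∨ G.Adj u w) := by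
  rw [φ.surjective.forall]
  simp only [φ.eq_or_adj_iff]

namespace NZCG

variable {F V : Type*} [Field F] [AddCommGroup V] [Module F V] {n : ℕ}
  (b : Module.Basis (Fin n) F V)

theorem support_nonempty (v : {v : V // v ≠ 0}) : (b.repr v).support.Nonempty := by
  rw [Finsupp.support_nonempty_iff, ne_eq, LinearEquiv.map_eq_zero_iff]
  exact v.2

theorem support_basis (i : Fin n) : (b.repr (b i)).support = {i} := by
  simp

theorem eq_or_adj_iff_not_disjoint (u v : {v : V // v ≠ 0}) :
    (u = v ∨ (NZCG b).Adj u v) ↔ ¬Disjoint (b.repr u).support (b.repr v).support := by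
  simp only [Finset.not_disjoint_iff, Finsupp.mem_support_iff]
  refine ⟨?_, fun ⟨i, hu, hv⟩ => or_iff_not_imp_left.2 fun huv => ⟨huv, i, hu, hv⟩⟩
  rintro (rfl | ⟨-, hi⟩)
  · exact (support_nonempty b u).imp fun _ hi => ⟨Finsupp.mem_support_iff.1 hi,
      Finsupp.mem_support_iff.1 hi⟩
  · exact hi

theorem support_subset_iff (v w : {v : V // v ≠ 0}) :
    (b.repr v).support ⊆ (b.repr w).support ↔
      ∀ u, u = v ∨ (NZCG b).Adj u v → u = w ∨ (NZCG b).Adj u w := by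
  simp only [eq_or_adj_iff_not_disjoint, not_imp_not]
  refine ⟨fun h u huw => huw.mono_right h, fun h i hi => ?_⟩
  have := mt (h ⟨b i, b.ne_zero i⟩)
  simp only [support_basis, Finset.disjoint_singleton_left, not_not] at this
  exact this hi

theorem support_map_subset_iff (φ : NZCG b ≃g NZCG b) (v w : {v : V // v ≠ 0}) :
    (b.repr (φ v)).support ⊆ (b.repr (φ w)).support ↔
      (b.repr v).support ⊆ (b.repr w).support := by
  rw [support_subset_iff, support_subset_iff, φ.closedNbhd_subset_iff]

theorem exists_support_eq_singleton_iff (v : {v : V // v ≠ 0}) :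
    (∃ j, (b.repr v).support = {j}) ↔
      ∀ w : {v : V // v ≠ 0}, (b.repr w).support ⊆ (b.repr v).support →
        (b.repr v).support ⊆ (b.repr w).support := by
  refine ⟨fun ⟨j, hj⟩ w hw => ?_, fun h => ?_⟩
  · rw [hj] at hw ⊢
    exact ((support_nonempty b w).subset_singleton_iff.1 hw).ge
  · obtain ⟨j, hj⟩ := support_nonempty b v
    have := h ⟨b j, b.ne_zero j⟩ (by rwa [support_basis, Finset.singleton_subset_iff])
    rw [support_basis] at this
    exact ⟨j, (support_nonempty b v).subset_singleton_iff.1 this⟩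

theorem exists_support_map_basis_eq_singleton (φ : NZCG b ≃g NZCG b) (i : Fin n) :
    ∃ j, (b.repr (φ ⟨b i, b.ne_zero i⟩)).support = {j} := by
  rw [exists_support_eq_singleton_iff, φ.surjective.forall]
  simp only [support_map_subset_iff]
  exact (exists_support_eq_singleton_iff b ⟨b i, b.ne_zero i⟩).1 ⟨i, support_basis b i⟩

end NZCG

open NZCG in
theorem nzcg_automorphism_form {F V : Type*} [Field F] [AddCommGroup V] [Module F V]
    {n : ℕ} (b : Module.Basis (Fin n) F V) (φ : NZCG b ≃g NZCG b) :
    ∃ (σ : Equiv.Perm (Fin n)) (c : Fin n → F), (∀ i, c i ≠ 0) ∧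
      ∀ i, ((φ ⟨b i, b.ne_zero i⟩ : {v : V // v ≠ 0}) : V) = c i • b (σ i) := by
  choose τ hτ using exists_support_map_basis_eq_singleton b φ
  have hτ_inj : Function.Injective τ := fun i j hij => by
    have := (support_map_subset_iff b φ ⟨b i, b.ne_zero i⟩ ⟨b j, b.ne_zero j⟩).1
      (by rw [hτ i, hτ j, hij])
    rwa [support_basis, support_basis, Finset.singleton_subset_singleton] at this
  refine ⟨Equiv.ofBijective τ (Finite.injective_iff_bijective.1 hτ_inj),
    fun i => b.repr (φ ⟨b i, b.ne_zero i⟩) (τ i), fun i => ?_, fun i => ?_⟩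
  · exact (Finsupp.support_eq_singleton.1 (hτ i)).1
  · rw [Equiv.ofBijective_apply, ← b.repr_symm_single,
      ← (Finsupp.support_eq_singleton.1 (hτ i)).2, LinearEquiv.symm_apply_apply]
end

section
/- Let φ be a graph automorphism of Γ(V_α) with φ(αᵢ) = cᵢ·α_{σ(i)} for a permutation σ ∈ Sₙ and non-zero scalars cᵢ. Then for any distinct indices i₁,...,i_k and any non-zero scalars c₁,...,c_k, φ(c₁α_{i₁} + ⋯ + c_kα_{i_k}) = d₁α_{σ(i₁)} + ⋯ + d_kα_{σ(i_k)} for some non-zero scalars d₁,...,d_k. In other words, φ preserves the support pattern up to the permutation σ. -/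
/-! A vertex `x` has a non-zero `i`-th coordinate iff it equals or is adjacent to a vertex
supported exactly at `i`. Hence a graph automorphism sending each `b i` to a multiple of
`b (σ i)` preserves adjacency to these vertices, so the support of `φ v` is `σ` applied to
the support of `v`. -/

namespace Module.Basis

variable {ι κ R M : Type*} [Semiring R] [AddCommMonoid M] [Module R M] (b : Basis ι R M)

theorem repr_smul_self_ne_zero_iff {r : R} (hr : r ≠ 0) (i m : ι) :
    b.repr (r • b i) m ≠ 0 ↔ m = i := by
  simp [Finsupp.single_apply_ne_zero, hr]

theorem repr_sum_smul_comp_ne_zero_iff [Fintype κ] {g : κ → ι} (hg : Function.Injective g)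
    {r : κ → R} (hr : ∀ j, r j ≠ 0) (i : ι) :
    b.repr (∑ j, r j • b (g j)) i ≠ 0 ↔ i ∈ Set.range g := by
  classical
  simp only [map_sum, map_smul, repr_self, Finsupp.smul_single, smul_eq_mul, mul_one,
    Finsupp.coe_finsetSum, Finset.sum_apply, Finsupp.single_apply]
  constructor
  · intro h
    by_contra hi
    exact h (Finset.sum_eq_zero fun j _ => if_neg fun hj => hi ⟨j, hj⟩)
  · rintro ⟨j, rfl⟩
    rw [Finset.sum_eq_single j (fun j' _ hj' => if_neg fun h => hj' (hg h)) (by simp),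
      if_pos rfl]
    exact hr j

theorem sum_repr_comp_of_support_subset [Fintype ι] [Fintype κ] {h : κ → ι}
    (hh : Function.Injective h) {w : M} (hw : ∀ i, b.repr w i ≠ 0 → i ∈ Set.range h) :
    ∑ j, b.repr w (h j) • b (h j) = w := by
  rw [Fintype.sum_of_injective h hh _ (fun i => b.repr w i • b i) _ fun _ => rfl, b.sum_repr]
  intro i hi
  rw [not_imp_comm.mp (hw i) hi, zero_smul]

end Module.Basis

namespace NZCG

variable {F V : Type*} [Field F] [AddCommGroup V] [Module F V] {n : ℕ}
  {b : Module.Basis (Fin n) F V}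

theorem repr_ne_zero_iff_eq_or_adj {i : Fin n} {x y : {v : V // v ≠ 0}}
    (hy : ∀ m, b.repr y m ≠ 0 ↔ m = i) :
    b.repr x i ≠ 0 ↔ x = y ∨ (NZCG b).Adj x y := by
  constructor
  · intro hx
    by_cases hxy : x = y
    · exact .inl hxy
    · exact .inr ⟨hxy, i, hx, (hy i).2 rfl⟩
  · rintro (rfl | ⟨-, j, hxj, hyj⟩)
    · exact (hy i).2 rfl
    · rwa [← (hy j).1 hyj]

theorem repr_iso_ne_zero_iff (φ : NZCG b ≃g NZCG b) {σ : Equiv.Perm (Fin n)} {c : Fin n → F}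
    (hc : ∀ i, c i ≠ 0)
    (hφ : ∀ i, ((φ ⟨b i, b.ne_zero i⟩ : {v : V // v ≠ 0}) : V) = c i • b (σ i))
    (x : {v : V // v ≠ 0}) (i : Fin n) :
    b.repr (φ x) (σ i) ≠ 0 ↔ b.repr x i ≠ 0 := by
  have hbi : ∀ m, b.repr (⟨b i, b.ne_zero i⟩ : {v : V // v ≠ 0}) m ≠ 0 ↔ m = i := by
    simpa using b.repr_smul_self_ne_zero_iff one_ne_zero i
  have hφbi : ∀ m, b.repr (φ ⟨b i, b.ne_zero i⟩ : V) m ≠ 0 ↔ m = σ i := by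
    simpa [hφ] using b.repr_smul_self_ne_zero_iff (hc i) (σ i)
  rw [repr_ne_zero_iff_eq_or_adj hφbi, repr_ne_zero_iff_eq_or_adj hbi, φ.injective.eq_iff,
    φ.map_adj_iff]

end NZCG

theorem nzcg_automorphism_support {F V : Type*} [Field F] [AddCommGroup V] [Module F V]
    {n : ℕ} (b : Module.Basis (Fin n) F V) (φ : NZCG b ≃g NZCG b)
    (σ : Equiv.Perm (Fin n)) (c : Fin n → F) (hc : ∀ i, c i ≠ 0)
    (hφ : ∀ i, ((φ ⟨b i, b.ne_zero i⟩ : {v : V // v ≠ 0}) : V) = c i • b (σ i))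
    {k : ℕ} (g : Fin k → Fin n) (hg : Function.Injective g)
    (c' : Fin k → F) (hc' : ∀ j, c' j ≠ 0)
    (hv : (∑ j, c' j • b (g j)) ≠ 0) :
    ∃ d : Fin k → F, (∀ j, d j ≠ 0) ∧
      ((φ ⟨∑ j, c' j • b (g j), hv⟩ : {v : V // v ≠ 0}) : V)
        = ∑ j, d j • b (σ (g j)) := by
  have hsupp : ∀ i, b.repr (φ ⟨_, hv⟩ : V) (σ i) ≠ 0 ↔ i ∈ Set.range g := fun i =>
    (NZCG.repr_iso_ne_zero_iff φ hc hφ _ i).trans (b.repr_sum_smul_comp_ne_zero_iff hg hc' i)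
  refine ⟨fun j => b.repr (φ ⟨_, hv⟩ : V) (σ (g j)), fun j => (hsupp (g j)).2 ⟨j, rfl⟩, ?_⟩
  refine (b.sum_repr_comp_of_support_subset (σ.injective.comp hg) fun m hm => ?_).symm
  obtain ⟨j, hj⟩ := (hsupp (σ.symm m)).1 (by rwa [σ.apply_symm_apply])
  exact ⟨j, by simp [hj]⟩
end

section
/- If dim V > 1, then the non-zero component graph Γ(V_α) is not vertex-transitive; in particular, no graph automorphism of Γ(V_α) maps α₁ to α₁ + α₂. -/
/-!
The neighbours of a basis vector `b i` are exactly the vectors with non-zero `i`-th coordinate,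
so they form a clique. The neighbours of `b i + b j` include `b i` and `b j`, which are not
adjacent. Having a clique as neighbourhood is preserved by graph isomorphisms.
-/

namespace SimpleGraph

variable {V W : Type*} {G : SimpleGraph V} {H : SimpleGraph W}

theorem Iso.isClique_neighborSet_apply (e : G ≃g H) {v : V}
    (hv : G.IsClique (G.neighborSet v)) : H.IsClique (H.neighborSet (e v)) := by
  intro x hx y hy hxy
  rw [← e.apply_symm_apply x, ← e.apply_symm_apply y, e.map_adj_iff]
  rw [← e.apply_symm_apply x, e.apply_mem_neighborSet_iff] at hx
  rw [← e.apply_symm_apply y, e.apply_mem_neighborSet_iff] at hy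
  exact hv hx hy (e.symm.injective.ne hxy)

end SimpleGraph

namespace NZCG

variable {F V : Type*} [Field F] [AddCommGroup V] [Module F V] {n : ℕ}
  (b : Module.Basis (Fin n) F V)

theorem adj_basis_iff {i : Fin n} {w : {v : V // v ≠ 0}} :
    (NZCG b).Adj ⟨b i, b.ne_zero i⟩ w ↔ ⟨b i, b.ne_zero i⟩ ≠ w ∧ b.repr w.1 i ≠ 0 := by
  refine and_congr_right fun _ ↦ ⟨?_, fun hw ↦ ⟨i, by simp, hw⟩⟩
  rintro ⟨k, hik, hw⟩
  obtain rfl : i = k := by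
    by_contra hne
    simp [hne] at hik
  exact hw

theorem isClique_neighborSet_basis (i : Fin n) :
    (NZCG b).IsClique ((NZCG b).neighborSet ⟨b i, b.ne_zero i⟩) :=
  fun _ hx _ hy hxy ↦ ⟨hxy, i, ((adj_basis_iff b).1 hx).2, ((adj_basis_iff b).1 hy).2⟩

theorem not_isClique_neighborSet_basis_add {i j : Fin n} (hij : i ≠ j)
    (hab : b i + b j ≠ 0) : ¬ (NZCG b).IsClique ((NZCG b).neighborSet ⟨b i + b j, hab⟩) := by
  have adj_basis {k : Fin n} (hk : k = i ∨ k = j) :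
      (NZCG b).Adj ⟨b i + b j, hab⟩ ⟨b k, b.ne_zero k⟩ := by
    refine ((adj_basis_iff b).2 ⟨fun h ↦ ?_, ?_⟩).symm <;>
      rcases hk with rfl | rfl <;> simp_all [Subtype.ext_iff, b.ne_zero]
  intro h
  have hadj := h (adj_basis (.inl rfl)) (adj_basis (.inr rfl))
    (fun heq ↦ hij (b.injective (congrArg Subtype.val heq)))
  simp [adj_basis_iff, hij] at hadj

end NZCG

theorem nzcg_not_vertex_transitive_general {F V : Type*} [Field F] [AddCommGroup V] [Module F V]
    {n : ℕ} (b : Module.Basis (Fin n) F V) (i j : Fin n) (hij : i ≠ j)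
    (hab : b i + b j ≠ 0) :
    (¬ ∀ u v : {v : V // v ≠ 0}, ∃ e : NZCG b ≃g NZCG b, e u = v) ∧
      ∀ e : NZCG b ≃g NZCG b, e ⟨b i, b.ne_zero i⟩ ≠ ⟨b i + b j, hab⟩ := by
  have not_map : ∀ e : NZCG b ≃g NZCG b, e ⟨b i, b.ne_zero i⟩ ≠ ⟨b i + b j, hab⟩ :=
    fun e he ↦ NZCG.not_isClique_neighborSet_basis_add b hij hab
      (he ▸ e.isClique_neighborSet_apply (NZCG.isClique_neighborSet_basis b i))
  exact ⟨fun htrans ↦ (htrans _ _).elim not_map, not_map⟩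

theorem nzcg_not_vertex_transitive {F V : Type*} [Field F] [AddCommGroup V] [Module F V]
    {n : ℕ} (hn : 1 < n) (b : Module.Basis (Fin n) F V) (i j : Fin n) (hij : i ≠ j)
    (hab : b i + b j ≠ 0) :
    (¬ ∀ u v : {v : V // v ≠ 0}, ∃ e : NZCG b ≃g NZCG b, e u = v) ∧
      ∀ e : NZCG b ≃g NZCG b, e ⟨b i, b.ne_zero i⟩ ≠ ⟨b i + b j, hab⟩ :=
  nzcg_not_vertex_transitive_general b i j hij hab
end
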